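/- Every Proto-Quipper-A typing derivation embeds into the structural approximation: if Δ ⊢ P : A in Proto-Quipper-A (the substructural system with context splitting and mode restrictions), then Δ ⊢ P : A in PQ-X (the system obtained by erasing all mode restrictions, erasing the independence principle, and using context sharing instead of splitting in all rules). -/

import Mathlib

namespace PQA

/-- Modes of Proto-Quipper-A: unrestricted, linear functional, linear circuit. -/
inductive Mode | U | L | Q
deriving DecidableEq, Repr

/-- The mode preorder generated by U > L, L > Q, Q > L. -/
def Mode.ge : Mode → Mode → Prop
  | .U, _ => True
  | .L, .U => False
  | .L, _ => True
  | .Q, .U => False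
  | .Q, _ => True

/-- Types, stratified by mode. -/
inductive Ty
  | unitT (m : Mode)
  | qubit
  | tensor (m : Mode) (A B : Ty)
  | arrow (m : Mode) (A B : Ty)
  | up (lo hi : Mode) (A : Ty)
  | down (A : Ty)
deriving DecidableEq, Repr

/-- The mode at which a type lives. -/
def Ty.mode : Ty → Mode
  | .unitT m => m
  | .qubit => .Q
  | .tensor m _ _ => m
  | .arrow m _ _ => m
  | .up _ hi _ => hi
  | .down _ => .L

/-- Simple (wire) types at the circuit mode Q. -/
inductive Ty.Simple : Ty → Prop
  | unit : Ty.Simple (.unitT .Q)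
  | qubit : Ty.Simple .qubit
  | tensor {A B : Ty} : Ty.Simple A → Ty.Simple B → Ty.Simple (.tensor .Q A B)

mutual
/-- Terms (functional and circuit, distinguished by mode annotations). -/
inductive Tm
  | var (x : String)
  | lam (m : Mode) (x : String) (M : Tm)
  | triv (m : Mode)
  | pair (m : Mode) (M N : Tm)
  | app (m : Mode) (M N : Tm)
  | susp (M : Tm)
  | force (M : Tm)
  | down (M : Tm)
  | gate (g : String) (S U : Ty)
  | matchWith (M : Tm) (p : Pat)
/-- Match patterns together with their bodies. -/
inductive Pat
  | punit (N : Tm)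
  | ppair (x y : String) (N : Tm)
  | pdown (x : String) (N : Tm)
end

mutual
/-- Capture-naive simultaneous substitution. -/
def Tm.subst (σ : String → Tm) : Tm → Tm
  | .var x => σ x
  | .lam m x M => .lam m x (M.subst (fun y => if y = x then .var y else σ y))
  | .triv m => .triv m
  | .pair m M N => .pair m (M.subst σ) (N.subst σ)
  | .app m M N => .app m (M.subst σ) (N.subst σ)
  | .susp M => .susp (M.subst σ)
  | .force M => .force (M.subst σ)
  | .down M => .down (M.subst σ)
  | .gate g S U => .gate g S U
  | .matchWith M p => .matchWith (M.subst σ) (p.subst σ)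

def Pat.subst (σ : String → Tm) : Pat → Pat
  | .punit N => .punit (N.subst σ)
  | .ppair x y N =>
      .ppair x y (N.subst (fun z => if z = x ∨ z = y then .var z else σ z))
  | .pdown x N => .pdown x (N.subst (fun z => if z = x then .var z else σ z))
end

/-- Substitution of a single term for a variable. -/
def subst1 (x : String) (V M : Tm) : Tm :=
  M.subst (fun y => if y = x then V else .var y)

/-- Variables bound by a pattern. -/
def Pat.vars : Pat → List String
  | .punit _ => []
  | .ppair x y _ => [x, y]
  | .pdown x _ => [x]

/-- The body of a pattern. -/
def Pat.body : Pat → Tm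
  | .punit N => N
  | .ppair _ _ N => N
  | .pdown _ N => N

/-- Apply a function to the body of a pattern (for commuting conversions). -/
def Pat.mapBody (f : Tm → Tm) : Pat → Pat
  | .punit N => .punit (f N)
  | .ppair x y N => .ppair x y (f N)
  | .pdown x N => .pdown x (f N)

/-- Replace the body of a pattern. -/
def Pat.withBody (p : Pat) (B : Tm) : Pat := p.mapBody (fun _ => B)

/-- The context of typed variables bound by a pattern eliminating type `A`. -/
def patCtx : Pat → Ty → List (String × Ty)
  | .punit _, _ => []
  | .ppair x y _, .tensor _ A B => [(x, A), (y, B)]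
  | .ppair x y _, _ => [(x, .qubit), (y, .qubit)]
  | .pdown x _, .down A => [(x, A)]
  | .pdown x _, _ => []

/-- Typing contexts. -/
abbrev Ctx := List (String × Ty)

/-- Every assumption in the context is at a mode ≥ m. -/
def CtxGe (Δ : Ctx) (m : Mode) : Prop := ∀ q ∈ Δ, Mode.ge q.2.mode m

/-- The context is entirely unrestricted. -/
def CtxU (Δ : Ctx) : Prop := CtxGe Δ .U

/-- Context splitting: linear assumptions go to one side, unrestricted
assumptions may be shared. -/
inductive Split : Ctx → Ctx → Ctx → Prop
  | nil : Split [] [] []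
  | left {Δ Δ₁ Δ₂ : Ctx} {q : String × Ty} :
      Split Δ Δ₁ Δ₂ → Split (q :: Δ) (q :: Δ₁) Δ₂
  | right {Δ Δ₁ Δ₂ : Ctx} {q : String × Ty} :
      Split Δ Δ₁ Δ₂ → Split (q :: Δ) Δ₁ (q :: Δ₂)
  | both {Δ Δ₁ Δ₂ : Ctx} {q : String × Ty} :
      q.2.mode = .U → Split Δ Δ₁ Δ₂ → Split (q :: Δ) (q :: Δ₁) (q :: Δ₂)

mutual
/-- The substructural Proto-Quipper-A typing judgment `Δ ⊢ P : A`. -/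
inductive HasTy : Ctx → Tm → Ty → Prop
  | var {Δ₁ Δ₂ : Ctx} {x : String} {A : Ty} :
      CtxU Δ₁ → CtxU Δ₂ → (A.mode = .Q → A.Simple) →
      HasTy (Δ₁ ++ (x, A) :: Δ₂) (.var x) A
  | lam {Δ : Ctx} {m : Mode} {x : String} {M : Tm} {A B : Ty} :
      A.mode = m → B.mode = m → (m = .Q → A.Simple ∧ B.Simple) →
      HasTy ((x, A) :: Δ) M B →
      HasTy Δ (.lam m x M) (.arrow m A B)
  | triv {Δ : Ctx} {m : Mode} : CtxU Δ → HasTy Δ (.triv m) (.unitT m)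
  | pair {Δ Δ₁ Δ₂ : Ctx} {m : Mode} {M N : Tm} {A B : Ty} :
      Split Δ Δ₁ Δ₂ → A.mode = m → B.mode = m →
      HasTy Δ₁ M A → HasTy Δ₂ N B →
      HasTy Δ (.pair m M N) (.tensor m A B)
  | app {Δ Δ₁ Δ₂ : Ctx} {m : Mode} {M N : Tm} {A B : Ty} :
      Split Δ Δ₁ Δ₂ →
      HasTy Δ₁ M (.arrow m A B) → HasTy Δ₂ N A →
      HasTy Δ (.app m M N) B
  | susp {Δ : Ctx} {lo hi : Mode} {M : Tm} {A : Ty} :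
      ((lo = .L ∧ hi = .U) ∨ (lo = .Q ∧ hi = .L)) →
      A.mode = lo → CtxGe Δ hi →
      HasTy Δ M A →
      HasTy Δ (.susp M) (.up lo hi A)
  | force {Δ : Ctx} {lo hi : Mode} {M : Tm} {A : Ty} :
      HasTy Δ M (.up lo hi A) → HasTy Δ (.force M) A
  | down {Δ : Ctx} {M : Tm} {A : Ty} :
      A.mode = .U → HasTy Δ M A → HasTy Δ (.down M) (.down A)
  | gate {Δ : Ctx} {g : String} {S U : Ty} :
      CtxU Δ → S.Simple → U.Simple →
      HasTy Δ (.gate g S U) (.arrow .Q S U)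
  | mtch {Δ Δ₁ Δ₂ : Ctx} {M : Tm} {p : Pat} {A B : Ty} :
      Split Δ Δ₁ Δ₂ →
      HasTy Δ₁ M A → PatTy Δ₂ p A B →
      HasTy Δ (.matchWith M p) B

/-- Pattern typing `Δ ⊢ p : A ⇒ B` for the substructural system. -/
inductive PatTy : Ctx → Pat → Ty → Ty → Prop
  | punit {Δ : Ctx} {m : Mode} {N : Tm} {B : Ty} :
      Mode.ge m B.mode → HasTy Δ N B →
      PatTy Δ (.punit N) (.unitT m) B
  | ppair {Δ : Ctx} {m : Mode} {x y : String} {N : Tm} {A₁ A₂ B : Ty} :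
      Mode.ge m B.mode →
      HasTy ((x, A₁) :: (y, A₂) :: Δ) N B →
      PatTy Δ (.ppair x y N) (.tensor m A₁ A₂) B
  | pdown {Δ : Ctx} {x : String} {N : Tm} {A B : Ty} :
      Mode.ge .L B.mode →
      HasTy ((x, A) :: Δ) N B →
      PatTy Δ (.pdown x N) (.down A) B
end

mutual
/-- The structural approximation PQ-X: same rule skeletons, shared
contexts, no splitting, no mode restrictions, implicit weakening. -/
inductive XTy : Ctx → Tm → Ty → Prop
  | var {Δ : Ctx} {x : String} {A : Ty} :
      (x, A) ∈ Δ → XTy Δ (.var x) A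
  | lam {Δ : Ctx} {m : Mode} {x : String} {M : Tm} {A B : Ty} :
      XTy ((x, A) :: Δ) M B →
      XTy Δ (.lam m x M) (.arrow m A B)
  | triv {Δ : Ctx} {m : Mode} : XTy Δ (.triv m) (.unitT m)
  | pair {Δ : Ctx} {m : Mode} {M N : Tm} {A B : Ty} :
      XTy Δ M A → XTy Δ N B → XTy Δ (.pair m M N) (.tensor m A B)
  | app {Δ : Ctx} {m : Mode} {M N : Tm} {A B : Ty} :
      XTy Δ M (.arrow m A B) → XTy Δ N A → XTy Δ (.app m M N) B
  | susp {Δ : Ctx} {lo hi : Mode} {M : Tm} {A : Ty} :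
      XTy Δ M A → XTy Δ (.susp M) (.up lo hi A)
  | force {Δ : Ctx} {lo hi : Mode} {M : Tm} {A : Ty} :
      XTy Δ M (.up lo hi A) → XTy Δ (.force M) A
  | down {Δ : Ctx} {M : Tm} {A : Ty} :
      XTy Δ M A → XTy Δ (.down M) (.down A)
  | gate {Δ : Ctx} {g : String} {S U : Ty} :
      S.Simple → U.Simple → XTy Δ (.gate g S U) (.arrow .Q S U)
  | mtch {Δ : Ctx} {M : Tm} {p : Pat} {A B : Ty} :
      XTy Δ M A → XPatTy Δ p A B → XTy Δ (.matchWith M p) B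

/-- Pattern typing for PQ-X. -/
inductive XPatTy : Ctx → Pat → Ty → Ty → Prop
  | punit {Δ : Ctx} {m : Mode} {N : Tm} {B : Ty} :
      XTy Δ N B → XPatTy Δ (.punit N) (.unitT m) B
  | ppair {Δ : Ctx} {m : Mode} {x y : String} {N : Tm} {A₁ A₂ B : Ty} :
      XTy ((x, A₁) :: (y, A₂) :: Δ) N B →
      XPatTy Δ (.ppair x y N) (.tensor m A₁ A₂) B
  | pdown {Δ : Ctx} {x : String} {N : Tm} {A B : Ty} :
      XTy ((x, A) :: Δ) N B →
      XPatTy Δ (.pdown x N) (.down A) B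
end

/-- `⌊Ψ⌋`: the underlying neutral variable context of a typed one. -/
def names (Ψ : Ctx) : List String := Ψ.map Prod.fst

mutual
/-- Canonical forms under a neutral variable context. -/
inductive Can : List String → Tm → Prop
  | triv {Pi : List String} {m : Mode} : Can Pi (.triv m)
  | pair {Pi : List String} {m : Mode} {M N : Tm} :
      Norm Pi M → Norm Pi N → Can Pi (.pair m M N)
  | lamU {Pi : List String} {x : String} {M : Tm} : Can Pi (.lam .U x M)
  | lamL {Pi : List String} {x : String} {M : Tm} : Can Pi (.lam .L x M)
  | lamQ {Pi : List String} {x : String} {M : Tm} :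
      Norm (x :: Pi) M → Can Pi (.lam .Q x M)
  | susp {Pi : List String} {M : Tm} : Can Pi (.susp M)
  | down {Pi : List String} {M : Tm} : Norm Pi M → Can Pi (.down M)

/-- Neutral forms: neutral variables and (iterated) gate applications. -/
inductive Neu : List String → Tm → Prop
  | var {Pi : List String} {x : String} : x ∈ Pi → Neu Pi (.var x)
  | gate {Pi : List String} {g : String} {S U : Ty} : Neu Pi (.gate g S U)
  | appCan {Pi : List String} {m : Mode} {g : String} {S U : Ty} {K : Tm} :
      Can Pi K → Neu Pi (.app m (.gate g S U) K)
  | appNeu {Pi : List String} {m : Mode} {g : String} {S U : Ty} {R : Tm} :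
      Neu Pi R → Neu Pi (.app m (.gate g S U) R)

/-- Normal forms: canonical, neutral, or a match on a neutral
discriminee with a normal body. -/
inductive Norm : List String → Tm → Prop
  | can {Pi : List String} {K : Tm} : Can Pi K → Norm Pi K
  | neu {Pi : List String} {R : Tm} : Neu Pi R → Norm Pi R
  | mtch {Pi : List String} {R : Tm} {p : Pat} :
      Neu Pi R → Norm (p.vars ++ Pi) p.body → Norm Pi (.matchWith R p)
end

/-- Elimination of a canonical form by a pattern. -/
inductive ECan : Tm → Pat → Tm → Prop
  | triv {m : Mode} {N : Tm} : ECan (.triv m) (.punit N) N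
  | pair {m : Mode} {V W : Tm} {x y : String} {N : Tm} :
      ECan (.pair m V W) (.ppair x y N) (subst1 y W (subst1 x V N))
  | down {V : Tm} {x : String} {N : Tm} :
      ECan (.down V) (.pdown x N) (subst1 x V N)

/-- The call-by-value single-step reduction relation, parameterized by
the context of free neutral circuit variables.  It reduces under circuit
lambda binders and under matches on neutral discriminees, and performs
commuting conversions of elimination forms past neutral matches. -/
inductive Step : List String → Tm → Tm → Prop
  | app1 {Pi : List String} {m : Mode} {M M' N : Tm} :
      Step Pi M M' → Step Pi (.app m M N) (.app m M' N)
  | app2 {Pi : List String} {m : Mode} {M N N' : Tm} :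
      Norm Pi M → Step Pi N N' → Step Pi (.app m M N) (.app m M N')
  | beta {Pi : List String} {m : Mode} {x : String} {M V : Tm} :
      Norm Pi V → Step Pi (.app m (.lam m x M) V) (subst1 x V M)
  | appCC {Pi : List String} {m : Mode} {R W : Tm} {p : Pat} :
      Neu Pi R → Norm Pi (.matchWith R p) → Norm Pi W →
      Step Pi (.app m (.matchWith R p) W)
        (.matchWith R (p.mapBody (fun b => .app m b W)))
  | lamQ {Pi : List String} {x : String} {M M' : Tm} :
      Step (x :: Pi) M M' → Step Pi (.lam .Q x M) (.lam .Q x M')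
  | pair1 {Pi : List String} {m : Mode} {M M' N : Tm} :
      Step Pi M M' → Step Pi (.pair m M N) (.pair m M' N)
  | pair2 {Pi : List String} {m : Mode} {M N N' : Tm} :
      Norm Pi M → Step Pi N N' → Step Pi (.pair m M N) (.pair m M N')
  | forceSusp {Pi : List String} {M : Tm} :
      Step Pi (.force (.susp M)) M
  | force1 {Pi : List String} {M M' : Tm} :
      Step Pi M M' → Step Pi (.force M) (.force M')
  | forceCC {Pi : List String} {R : Tm} {p : Pat} :
      Neu Pi R → Norm Pi (.matchWith R p) →
      Step Pi (.force (.matchWith R p))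
        (.matchWith R (p.mapBody (fun b => .force b)))
  | down1 {Pi : List String} {M M' : Tm} :
      Step Pi M M' → Step Pi (.down M) (.down M')
  | mtch1 {Pi : List String} {M M' : Tm} {p : Pat} :
      Step Pi M M' → Step Pi (.matchWith M p) (.matchWith M' p)
  | mtchK {Pi : List String} {K P : Tm} {p : Pat} :
      Can Pi K → ECan K p P → Step Pi (.matchWith K p) P
  | mtchR {Pi : List String} {R B' : Tm} {p : Pat} :
      Neu Pi R → Step (p.vars ++ Pi) p.body B' →
      Step Pi (.matchWith R p) (.matchWith R (p.withBody B'))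
  | mtchCC {Pi : List String} {R : Tm} {p q : Pat} :
      Neu Pi R → Norm Pi (.matchWith R p) →
      Step Pi (.matchWith (.matchWith R p) q)
        (.matchWith R (p.mapBody (fun b => .matchWith b q)))

/-- Multi-step reduction. -/
def Steps (Pi : List String) : Tm → Tm → Prop :=
  Relation.ReflTransGen (Step Pi)

/-- `P` halts: it reduces to a normal form. -/
def Halts (Pi : List String) (P : Tm) : Prop :=
  ∃ V, Steps Pi P V ∧ Norm Pi V

/-- `σ` is a neutral substitution from `Ψ` to `Φ`: it maps each neutral
variable of `Φ` to a neutral, well-typed term over `Ψ`. -/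
def NSub (σ : String → Tm) (Ψ Φ : Ctx) : Prop :=
  ∀ q ∈ Φ, Neu (names Ψ) (σ q.1) ∧ XTy Ψ (σ q.1) q.2

/-- Closure of a base predicate under neutral terms, one-step expansion,
and matches on neutral discriminees (the type-generic clauses of the
Kripke logical normalization predicate). -/
inductive Close (A : Ty) (base : Ctx → Tm → Prop) : Ctx → Tm → Prop
  | base {Ψ : Ctx} {P : Tm} : base Ψ P → Close A base Ψ P
  | neu {Ψ : Ctx} {R : Tm} :
      Neu (names Ψ) R → XTy Ψ R A → Close A base Ψ R
  | steps {Ψ : Ctx} {P P' : Tm} :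
      Step (names Ψ) P P' → Close A base Ψ P' → Close A base Ψ P
  | mtch {Ψ : Ctx} {R : Tm} {p : Pat} {S : Ty} :
      Neu (names Ψ) R → XTy Ψ R S →
      Close A base (patCtx p S ++ Ψ) p.body →
      Close A base Ψ (.matchWith R p)

/-- The type-directed clauses of the logical predicate: introduction
forms at positive types, elimination forms at negative types. -/
def LRbase : Ty → Ctx → Tm → Prop
  | .unitT m, _, P => P = .triv m
  | .qubit, _, _ => False
  | .tensor m A B, Ψ, P => ∃ M N, P = .pair m M N ∧
      Close A (LRbase A) Ψ M ∧ Close B (LRbase B) Ψ N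
  | .arrow m A B, Ψ, P => Halts (names Ψ) P ∧
      ∀ (Φ : Ctx) (σ : String → Tm), NSub σ Φ Ψ →
        ∀ Q, Close A (LRbase A) Φ Q →
          Close B (LRbase B) Φ (.app m (P.subst σ) Q)
  | .up _ _ A, Ψ, P => Close A (LRbase A) Ψ (.force P)
  | .down A, Ψ, P => ∃ V, P = .down V ∧ Close A (LRbase A) Ψ V

/-- The Kripke logical normalization predicate `Ψ ⊩ P ∈ ⟦A⟧`. -/
def LR (Ψ : Ctx) (P : Tm) (A : Ty) : Prop := Close A (LRbase A) Ψ P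

/-- Reducible substitutions: each variable is mapped to a functionally
closed normal form satisfying the logical predicate at its type. -/
def RSub (Ψ : Ctx) (σ : String → Tm) (Δ : Ctx) : Prop :=
  ∀ q ∈ Δ, Norm (names Ψ) (σ q.1) ∧ LR Ψ (σ q.1) q.2

/-! Every rule of Proto-Quipper-A is an instance of the corresponding PQ-X rule once its mode
side conditions are dropped. The only real work is at the splitting rules: both halves of a
split are sub-contexts of the whole, so the premises can be weakened into the shared context. -/

theorem Split.subset_left {Δ Δ₁ Δ₂ : Ctx} (h : Split Δ Δ₁ Δ₂) : Δ₁ ⊆ Δ := by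
  induction h with
  | nil => exact List.Subset.refl _
  | left _ ih => exact List.cons_subset_cons _ ih
  | right _ ih => exact List.subset_cons_of_subset _ ih
  | both _ _ ih => exact List.cons_subset_cons _ ih

theorem Split.subset_right {Δ Δ₁ Δ₂ : Ctx} (h : Split Δ Δ₁ Δ₂) : Δ₂ ⊆ Δ := by
  induction h with
  | nil => exact List.Subset.refl _
  | left _ ih => exact List.subset_cons_of_subset _ ih
  | right _ ih => exact List.cons_subset_cons _ ih
  | both _ _ ih => exact List.cons_subset_cons _ ih

mutual

theorem XTy.weaken {Δ Δ' : Ctx} {P : Tm} {A : Ty} :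
    XTy Δ P A → Δ ⊆ Δ' → XTy Δ' P A
  | .var hx, hs => .var (hs hx)
  | .lam hM, hs => .lam (hM.weaken (List.cons_subset_cons _ hs))
  | .triv, _ => .triv
  | .pair hM hN, hs => .pair (hM.weaken hs) (hN.weaken hs)
  | .app hM hN, hs => .app (hM.weaken hs) (hN.weaken hs)
  | .susp hM, hs => .susp (hM.weaken hs)
  | .force hM, hs => .force (hM.weaken hs)
  | .down hM, hs => .down (hM.weaken hs)
  | .gate hS hU, _ => .gate hS hU
  | .mtch hM hp, hs => .mtch (hM.weaken hs) (hp.weaken hs)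

theorem XPatTy.weaken {Δ Δ' : Ctx} {p : Pat} {A B : Ty} :
    XPatTy Δ p A B → Δ ⊆ Δ' → XPatTy Δ' p A B
  | .punit hN, hs => .punit (hN.weaken hs)
  | .ppair hN, hs =>
      .ppair (hN.weaken (List.cons_subset_cons _ (List.cons_subset_cons _ hs)))
  | .pdown hN, hs => .pdown (hN.weaken (List.cons_subset_cons _ hs))

end

/-- every Proto-Quipper-A typing derivation embeds into the
structural approximation PQ-X. -/
theorem pqa_embeds_in_pqx {Δ : Ctx} {P : Tm} {A : Ty}
    (h : HasTy Δ P A) : XTy Δ P A := by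
  induction h using HasTy.rec (motive_2 := fun Δ p A B _ => XPatTy Δ p A B) with
  | var _ _ _ => exact .var (List.mem_append_right _ List.mem_cons_self)
  | lam _ _ _ _ ih => exact .lam ih
  | triv _ => exact .triv
  | pair hsplit _ _ _ _ ihM ihN =>
      exact .pair (ihM.weaken hsplit.subset_left) (ihN.weaken hsplit.subset_right)
  | app hsplit _ _ ihM ihN =>
      exact .app (ihM.weaken hsplit.subset_left) (ihN.weaken hsplit.subset_right)
  | susp _ _ _ _ ih => exact .susp ih
  | force _ ih => exact .force ih
  | down _ _ ih => exact .down ih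
  | gate _ hS hU => exact .gate hS hU
  | mtch hsplit _ _ ihM ihp =>
      exact .mtch (ihM.weaken hsplit.subset_left) (ihp.weaken hsplit.subset_right)
  | punit _ _ ih => exact .punit ih
  | ppair _ _ ih => exact .ppair ih
  | pdown _ _ ih => exact .pdown ih

end PQA
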